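/- arXiv:1312.4063 — 6 statements merged into one kernel-verified Lean document; each statement's English description precedes it below -/
import Mathlib

section
/- Let A be an associative complex superalgebra containing even elements E, F, K (with K invertible) satisfying the U_{q_*}(sl(2)) relations KE = q_*^2 EK, KF = q_*^{-2} FK, [E,F] = (K - K^{-1})/(q_* - q_*^{-1}), and containing odd elements ξ, η with ξ² = η² = 1, ξη = -ηξ, that commute with E, F, K. Then the elements 𝓔 = ξE, 𝓕 = ηF, 𝓚 = iξηK satisfy the U_q(osp(2|1)) relations: 𝓔𝓕 + 𝓕𝓔 = (𝓚 - 𝓚^{-1})/(q + q^{-1}), 𝓚𝓔 = q²𝓔𝓚, 𝓚𝓕 = q^{-2}𝓕𝓚, where q_* = -i·q. -/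
open Complex

/-! Since `ξη` anticommutes with both `ξ` and `η`, moving `𝓚 = iξηK` past `ξE` or `ηF`
produces an extra sign, which turns `q_*^{±2} = -q^{±2}` into `q^{±2}`; likewise the
anticommutator `{ξE, ηF}` is `ξη [E, F]`, and `(q_* - q_*⁻¹)⁻¹ = i (q + q⁻¹)⁻¹`. -/

section Anticommuting

variable {A : Type*} [Ring A] {u v a b : A}

theorem mul_mul_add_mul_mul_of_anticomm (huv : u * v = -(v * u))
    (hub : Commute u b) (hva : Commute v a) :
    u * a * (v * b) + v * b * (u * a) = u * v * (a * b - b * a) := by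
  rw [hva.symm.mul_mul_mul_comm, hub.symm.mul_mul_mul_comm, huv]
  noncomm_ring

theorem mul_mul_eq_neg_smul_of_anticomm {R : Type*} [CommRing R] [Algebra R A] {c : R}
    (huv : u * v = -(v * u)) (hub : Commute u b) (hva : Commute v a)
    (hab : a * b = c • (b * a)) :
    u * a * (v * b) = -c • (v * b * (u * a)) := by
  rw [hva.symm.mul_mul_mul_comm, hub.symm.mul_mul_mul_comm, hab, huv, neg_mul, mul_smul_comm,
    neg_smul]

theorem mul_mul_left_anticomm (h : a * b = -(b * a)) : a * b * a = -(a * (a * b)) := by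
  rw [mul_assoc, ← neg_eq_iff_eq_neg.mpr h, mul_neg]

theorem mul_mul_right_anticomm (h : a * b = -(b * a)) : a * b * b = -(b * (a * b)) := by
  rw [← mul_assoc, ← neg_eq_iff_eq_neg.mpr h, neg_mul, neg_neg]

end Anticommuting

section Scalars

variable (q : ℂ)

theorem neg_I_mul_sq : (-I * q) ^ 2 = -q ^ 2 := by
  linear_combination q ^ 2 * I_sq

theorem neg_I_mul_zpow_neg_two : (-I * q) ^ (-2 : ℤ) = -q ^ (-2 : ℤ) := by
  rw [zpow_neg, zpow_neg, zpow_ofNat, zpow_ofNat, neg_I_mul_sq, inv_neg]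

theorem inv_neg_I_mul_sub_inv : ((-I * q) - (-I * q)⁻¹)⁻¹ = I * (q + q⁻¹)⁻¹ := by
  rw [mul_inv, inv_neg, inv_I, neg_neg,
    show -I * q - I * q⁻¹ = -I * (q + q⁻¹) by ring, mul_inv, inv_neg, inv_I, neg_neg]

end Scalars

theorem osp21_from_sl2_spinor_general (q : ℂ)
    (A : Type*) [Ring A] [Algebra ℂ A]
    (E F K K' ξ η : A)
    (hKE : K * E = ((-I * q) ^ 2) • (E * K))
    (hKF : K * F = ((-I * q) ^ (-2 : ℤ)) • (F * K))
    (hEF : E * F - F * E = ((-I * q) - (-I * q)⁻¹)⁻¹ • (K - K'))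
    (hξη : ξ * η = -(η * ξ))
    (hξE : ξ * E = E * ξ) (hξF : ξ * F = F * ξ)
    (hξK : ξ * K = K * ξ)
    (hηE : η * E = E * η) (hηF : η * F = F * η)
    (hηK : η * K = K * η) :
    (ξ * E) * (η * F) + (η * F) * (ξ * E)
        = (q + q⁻¹)⁻¹ • (I • (ξ * η * K) - I • (ξ * η * K')) ∧
    (I • (ξ * η * K)) * (ξ * E) = (q ^ 2) • ((ξ * E) * (I • (ξ * η * K))) ∧
    (I • (ξ * η * K)) * (η * F)
        = (q ^ (-2 : ℤ)) • ((η * F) * (I • (ξ * η * K))) := by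
  have hξηE : Commute (ξ * η) E := Commute.mul_left hξE hηE
  have hξηF : Commute (ξ * η) F := Commute.mul_left hξF hηF
  refine ⟨?_, ?_, ?_⟩
  · rw [mul_mul_add_mul_mul_of_anticomm hξη hξF hηE, hEF, inv_neg_I_mul_sub_inv]
    simp only [mul_smul_comm, smul_smul, mul_sub, smul_sub, mul_comm I]
  · rw [smul_mul_assoc, mul_smul_comm, smul_comm,
      mul_mul_eq_neg_smul_of_anticomm (mul_mul_left_anticomm hξη) hξηE hξK hKE, neg_I_mul_sq,
      neg_neg]
  · rw [smul_mul_assoc, mul_smul_comm, smul_comm,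
      mul_mul_eq_neg_smul_of_anticomm (mul_mul_right_anticomm hξη) hξηF hηK hKF,
      neg_I_mul_zpow_neg_two, neg_neg]

/-- If `E, F, K` (with `K` invertible, inverse `K'`) satisfy the
`U_{q_*}(sl(2))` relations with `q_* = -I*q`, and `ξ, η` are Clifford elements
(`ξ² = η² = 1`, `ξη = -ηξ`) commuting with `E, F, K, K'`, then
`𝓔 = ξE`, `𝓕 = ηF`, `𝓚 = i·ξηK` (with `𝓚⁻¹ = i·ξηK'`) satisfy the
`U_q(osp(2|1))` relations. -/
theorem osp21_from_sl2_spinor (q : ℂ) (hq : q ≠ 0)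
    (hq1 : q + q⁻¹ ≠ 0) (hq2 : (-I * q) - (-I * q)⁻¹ ≠ 0)
    (A : Type*) [Ring A] [Algebra ℂ A]
    (E F K K' ξ η : A)
    (hK : K * K' = 1) (hK' : K' * K = 1)
    (hKE : K * E = ((-I * q) ^ 2) • (E * K))
    (hKF : K * F = ((-I * q) ^ (-2 : ℤ)) • (F * K))
    (hEF : E * F - F * E = ((-I * q) - (-I * q)⁻¹)⁻¹ • (K - K'))
    (hξ : ξ * ξ = 1) (hη : η * η = 1) (hξη : ξ * η = -(η * ξ))
    (hξE : ξ * E = E * ξ) (hξF : ξ * F = F * ξ)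
    (hξK : ξ * K = K * ξ) (hξK' : ξ * K' = K' * ξ)
    (hηE : η * E = E * η) (hηF : η * F = F * η)
    (hηK : η * K = K * η) (hηK' : η * K' = K' * η) :
    (ξ * E) * (η * F) + (η * F) * (ξ * E)
        = (q + q⁻¹)⁻¹ • (I • (ξ * η * K) - I • (ξ * η * K')) ∧
    (I • (ξ * η * K)) * (ξ * E) = (q ^ 2) • ((ξ * E) * (I • (ξ * η * K))) ∧
    (I • (ξ * η * K)) * (η * F)
        = (q ^ (-2 : ℤ)) • ((η * F) * (I • (ξ * η * K))) :=
  osp21_from_sl2_spinor_general q A E F K K' ξ η hKE hKF hEF hξη hξE hξF hξK hηE hηF hηK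
end

section
/- In an associative algebra with elements 𝓔, 𝓕, 𝓚 (𝓚 invertible) satisfying 𝓔𝓕 + 𝓕𝓔 = (𝓚 - 𝓚^{-1})/(q + q^{-1}), 𝓚𝓔 = q²𝓔𝓚, 𝓚𝓕 = q^{-2}𝓕𝓚, for every positive integer n one has 𝓔𝓕ⁿ - (-1)ⁿ 𝓕ⁿ𝓔 = (qⁿ{n}_q/(1+q²))·𝓚𝓕^{n-1} + ((-1)ⁿ q^{-n}{n}_q/(1+q^{-2}))·𝓚^{-1}𝓕^{n-1}, where {n}_q = (q^{-n} - (-1)ⁿqⁿ)/(q + q^{-1}). -/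
/-!
Telescoping gives `𝓔𝓕ⁿ - (-1)ⁿ𝓕ⁿ𝓔 = ∑_{k<n} (-1)ᵏ 𝓕ᵏ (𝓔𝓕 + 𝓕𝓔) 𝓕ⁿ⁻¹⁻ᵏ`. The anticommutator is a
multiple of `𝓚 - 𝓚⁻¹`, and commuting `𝓚^{±1}` to the left through `𝓕ᵏ` costs `q^{±2k}`, so the
coefficients of `𝓚𝓕ⁿ⁻¹` and `𝓚⁻¹𝓕ⁿ⁻¹` are geometric sums in `-q²` and `-q⁻²`, whose closed forms
are the stated `q`-numbers.
-/

open Finset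

theorem mul_pow_sub_neg_one_pow_mul_eq_sum_anticomm {R : Type*} [Ring R] (a b : R) (n : ℕ) :
    a * b ^ n - (-1) ^ n * (b ^ n * a) =
      ∑ k ∈ range n, (-1) ^ k * (b ^ k * (a * b + b * a) * b ^ (n - 1 - k)) := by
  induction n with
  | zero => simp
  | succ n ih =>
    have shift : ∑ k ∈ range n, (-1) ^ k * (b ^ k * (a * b + b * a) * b ^ (n + 1 - 1 - k)) =
        (∑ k ∈ range n, (-1) ^ k * (b ^ k * (a * b + b * a) * b ^ (n - 1 - k))) * b := by
      rw [sum_mul]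
      refine sum_congr rfl fun k hk => ?_
      rw [mul_assoc _ _ b, mul_assoc (b ^ k * _), ← pow_succ,
        show n + 1 - 1 - k = n - 1 - k + 1 by grind]
    rw [sum_range_succ, shift, ← ih, Nat.add_sub_cancel, Nat.sub_self, pow_zero, mul_one,
      pow_succ, pow_succ]
    noncomm_ring

section Algebra

variable {S A : Type*} [CommRing S] [Ring A] [Algebra S A]

theorem pow_mul_eq_pow_smul_mul_pow {x y : A} {t : S} (h : x * y = t • (y * x)) (k : ℕ) :
    x ^ k * y = t ^ k • (y * x ^ k) := by
  induction k with
  | zero => simp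
  | succ k ih =>
    rw [pow_succ, mul_assoc, h, mul_smul_comm, ← mul_assoc, ih, smul_mul_assoc, smul_smul,
      mul_assoc, ← pow_succ, pow_succ' t]

theorem mul_pow_sub_neg_one_pow_smul_mul_eq
    {c t t' : S} {E F K K' : A} (hEF : E * F + F * E = c • (K - K'))
    (hFK : F * K = t • (K * F)) (hFK' : F * K' = t' • (K' * F)) (n : ℕ) :
    E * F ^ n - ((-1 : S) ^ n) • (F ^ n * E) =
      (c * ∑ k ∈ range n, (-t) ^ k) • (K * F ^ (n - 1))
        - (c * ∑ k ∈ range n, (-t') ^ k) • (K' * F ^ (n - 1)) := by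
  have neg_one_pow_mul : ∀ (m : ℕ) (x : A), (-1 : A) ^ m * x = ((-1 : S) ^ m) • x := by
    simp [Algebra.smul_def]
  have term : ∀ k ∈ range n, (-1) ^ k * (F ^ k * (E * F + F * E) * F ^ (n - 1 - k)) =
      (c * (-t) ^ k) • (K * F ^ (n - 1)) - (c * (-t') ^ k) • (K' * F ^ (n - 1)) := by
    intro k hk
    rw [neg_one_pow_mul, hEF, ← pow_mul_pow_sub F (Nat.le_sub_one_of_lt (mem_range.mp hk))]
    simp only [mul_smul_comm, smul_mul_assoc, mul_sub, sub_mul, ← mul_assoc,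
      pow_mul_eq_pow_smul_mul_pow hFK, pow_mul_eq_pow_smul_mul_pow hFK']
    module
  rw [← neg_one_pow_mul, mul_pow_sub_neg_one_pow_mul_eq_sum_anticomm,
    sum_congr rfl term, sum_sub_distrib, mul_sum, mul_sum, sum_smul, sum_smul]

theorem mul_inverse_eq_smul_mul_of_mul_eq_smul {s : S} {F K K' : A} (hK : K * K' = 1)
    (hK' : K' * K = 1) (hKF : K * F = s • (F * K)) : F * K' = s • (K' * F) :=
  calc F * K' = K' * (K * F) * K' := by rw [← mul_assoc, hK', one_mul]
    _ = s • (K' * F) := by rw [hKF, mul_smul_comm, smul_mul_assoc, mul_assoc, mul_assoc, hK,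
        mul_one]

end Algebra

theorem geom_sum_neg_eq {K : Type*} [Field K] {x : K} (hx : 1 + x ≠ 0) (n : ℕ) :
    ∑ k ∈ range n, (-x) ^ k = (1 - (-x) ^ n) / (1 + x) := by
  have hx' : -x ≠ 1 := fun h => hx (by linear_combination -h)
  simpa using geom_sum_Ico' hx' (Nat.zero_le n)

theorem inv_add_inv_mul_geom_sum_neg_sq {q : ℂ} (hq : q ≠ 0) (hq2 : 1 + q ^ 2 ≠ 0) (n : ℕ) :
    (q + q⁻¹)⁻¹ * ∑ k ∈ range n, (-q ^ 2) ^ k =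
      (q ^ n * ((q ^ (-(n : ℤ)) - (-1 : ℂ) ^ n * q ^ (n : ℤ)) / (q + q⁻¹))) / (1 + q ^ 2) := by
  rw [geom_sum_neg_eq hq2, mul_div_assoc']
  congr 1
  have hu : q ^ n ≠ 0 := pow_ne_zero n hq
  rw [neg_pow, zpow_neg, zpow_natCast, ← pow_mul, pow_mul']
  field_simp

theorem inv_add_inv_mul_geom_sum_neg_zpow_neg_two {q : ℂ} (hq : q ≠ 0)
    (hq3 : 1 + q ^ (-2 : ℤ) ≠ 0) (n : ℕ) :
    -((q + q⁻¹)⁻¹ * ∑ k ∈ range n, (-q ^ (-2 : ℤ)) ^ k) =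
      ((-1 : ℂ) ^ n * q ^ (-(n : ℤ)) * ((q ^ (-(n : ℤ)) - (-1 : ℂ) ^ n * q ^ (n : ℤ)) / (q + q⁻¹)))
        / (1 + q ^ (-2 : ℤ)) := by
  rw [geom_sum_neg_eq hq3, mul_div_assoc', ← neg_div]
  congr 1
  have hu : q ^ n ≠ 0 := pow_ne_zero n hq
  have hs : ((-1 : ℂ) ^ n) ^ 2 = 1 := by rw [← pow_mul, pow_mul']; simp
  rw [neg_pow, zpow_neg, zpow_neg, zpow_natCast, zpow_ofNat, inv_pow, ← pow_mul, pow_mul',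
    div_eq_mul_inv _ (q + q⁻¹)]
  generalize (q + q⁻¹)⁻¹ = c
  field_simp
  linear_combination c * (q ^ n) ^ 2 * hs

theorem osp21_EF_power_relation_general (q : ℂ) (hq : q ≠ 0)
    (hq2 : 1 + q ^ 2 ≠ 0) (hq3 : 1 + q ^ (-2 : ℤ) ≠ 0)
    (A : Type*) [Ring A] [Algebra ℂ A]
    (𝓔 𝓕 𝓚 𝓚' : A)
    (hK : 𝓚 * 𝓚' = 1) (hK' : 𝓚' * 𝓚 = 1)
    (hEF : 𝓔 * 𝓕 + 𝓕 * 𝓔 = (q + q⁻¹)⁻¹ • (𝓚 - 𝓚'))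
    (hKF : 𝓚 * 𝓕 = (q ^ (-2 : ℤ)) • (𝓕 * 𝓚))
    (n : ℕ) :
    𝓔 * 𝓕 ^ n - ((-1 : ℂ) ^ n) • (𝓕 ^ n * 𝓔)
      = ((q ^ n * ((q ^ (-(n : ℤ)) - (-1 : ℂ) ^ n * q ^ (n : ℤ)) / (q + q⁻¹)))
            / (1 + q ^ 2)) • (𝓚 * 𝓕 ^ (n - 1))
        + (((-1 : ℂ) ^ n * q ^ (-(n : ℤ))
              * ((q ^ (-(n : ℤ)) - (-1 : ℂ) ^ n * q ^ (n : ℤ)) / (q + q⁻¹)))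
            / (1 + q ^ (-2 : ℤ))) • (𝓚' * 𝓕 ^ (n - 1)) := by
  have hFK : 𝓕 * 𝓚 = q ^ 2 • (𝓚 * 𝓕) := by
    simpa [zpow_neg] using (eq_inv_smul_iff₀ (zpow_ne_zero (-2) hq)).mpr hKF.symm
  have hFK' : 𝓕 * 𝓚' = q ^ (-2 : ℤ) • (𝓚' * 𝓕) :=
    mul_inverse_eq_smul_mul_of_mul_eq_smul hK hK' hKF
  rw [mul_pow_sub_neg_one_pow_smul_mul_eq hEF hFK hFK' n, sub_eq_add_neg, ← neg_smul,
    inv_add_inv_mul_geom_sum_neg_sq hq hq2, inv_add_inv_mul_geom_sum_neg_zpow_neg_two hq hq3]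

/-- In an algebra with `𝓔, 𝓕, 𝓚` (`𝓚` invertible with inverse `𝓚'`)
satisfying the `U_q(osp(2|1))` relations, for every `n ≥ 1`:
`𝓔𝓕ⁿ - (-1)ⁿ𝓕ⁿ𝓔 = (qⁿ{n}_q/(1+q²))·𝓚𝓕^{n-1} + ((-1)ⁿq^{-n}{n}_q/(1+q^{-2}))·𝓚'𝓕^{n-1}`. -/
theorem osp21_EF_power_relation (q : ℂ) (hq : q ≠ 0)
    (hq1 : q + q⁻¹ ≠ 0) (hq2 : 1 + q ^ 2 ≠ 0) (hq3 : 1 + q ^ (-2 : ℤ) ≠ 0)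
    (A : Type*) [Ring A] [Algebra ℂ A]
    (𝓔 𝓕 𝓚 𝓚' : A)
    (hK : 𝓚 * 𝓚' = 1) (hK' : 𝓚' * 𝓚 = 1)
    (hEF : 𝓔 * 𝓕 + 𝓕 * 𝓔 = (q + q⁻¹)⁻¹ • (𝓚 - 𝓚'))
    (hKE : 𝓚 * 𝓔 = (q ^ 2) • (𝓔 * 𝓚))
    (hKF : 𝓚 * 𝓕 = (q ^ (-2 : ℤ)) • (𝓕 * 𝓚))
    (n : ℕ) (hn : 1 ≤ n) :
    𝓔 * 𝓕 ^ n - ((-1 : ℂ) ^ n) • (𝓕 ^ n * 𝓔)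
      = ((q ^ n * ((q ^ (-(n : ℤ)) - (-1 : ℂ) ^ n * q ^ (n : ℤ)) / (q + q⁻¹)))
            / (1 + q ^ 2)) • (𝓚 * 𝓕 ^ (n - 1))
        + (((-1 : ℂ) ^ n * q ^ (-(n : ℤ))
              * ((q ^ (-(n : ℤ)) - (-1 : ℂ) ^ n * q ^ (n : ℤ)) / (q + q⁻¹)))
            / (1 + q ^ (-2 : ℤ))) • (𝓚' * 𝓕 ^ (n - 1)) :=
  osp21_EF_power_relation_general q hq hq2 hq3 A 𝓔 𝓕 𝓚 𝓚' hK hK' hEF hKF n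
end

section
/- In an associative superalgebra containing 𝓔, 𝓕, 𝓚 satisfying the U_q(osp(2|1)) relations (𝓔, 𝓕 odd, 𝓚 even invertible), the element √C := 𝓕𝓔 - (q𝓚 - q^{-1}𝓚^{-1})/(q+q^{-1})² super-commutes with the generators: it anticommutes with 𝓔 and 𝓕 and commutes with 𝓚. Consequently its square commutes with 𝓔, 𝓕, and 𝓚. -/
/-!
With `s = (q + q⁻¹)⁻¹`, the odd part `FE` of `√C` has anticommutator `(EF + FE)E = s(q²EK - q⁻²EK')`
with `E`, and the Cartan part `s²(qK - q⁻¹K')` has exactly the same anticommutator with `E`, because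
`s²(q³ + q) = sq²` and `s²(q⁻¹ + q⁻³) = sq⁻²`; the same cancellation happens for `F`. The weights `q²`
of `E` and `q⁻²` of `F` cancel in `FE`, so `K` commutes with `√C`. Finally, an element anticommuting
with `x` has a square commuting with `x`.
-/

section
variable {𝕜 A : Type*} [Field 𝕜] [Ring A] [Algebra 𝕜 A]

theorem mul_eq_inv_smul_mul_of_mul_eq_smul_mul {K K' x : A} {c : 𝕜} (hc : c ≠ 0)
    (hK : K * K' = 1) (hK' : K' * K = 1) (hKx : K * x = c • (x * K)) :
    K' * x = c⁻¹ • (x * K') := by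
  have hxK : x * K = c⁻¹ • (K * x) := by rw [hKx, smul_smul, inv_mul_cancel₀ hc, one_smul]
  calc K' * x = K' * (x * K) * K' := by rw [mul_assoc, mul_assoc, hK, mul_one]
    _ = c⁻¹ • (x * K') := by rw [hxK, mul_smul_comm, smul_mul_assoc, ← mul_assoc, hK', one_mul]

end

section
variable {𝕜 A : Type*} [Field 𝕜] [Ring A] [Algebra 𝕜 A] (q : 𝕜) (E F K K' : A)

noncomputable def osp21SqrtCasimir : A := F * E - ((q + q⁻¹) ^ 2)⁻¹ • (q • K - q⁻¹ • K')

variable {q E F K K'}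

theorem osp21SqrtCasimir_anticommute_E (hq : q + q⁻¹ ≠ 0)
    (hEF : E * F + F * E = (q + q⁻¹)⁻¹ • (K - K'))
    (hKE : K * E = q ^ 2 • (E * K)) (hK'E : K' * E = (q ^ 2)⁻¹ • (E * K')) :
    osp21SqrtCasimir q E F K K' * E + E * osp21SqrtCasimir q E F K K' = 0 := by
  have hq0 : q ≠ 0 := by rintro rfl; simp at hq
  calc _ = (E * F + F * E) * E
        - ((q + q⁻¹) ^ 2)⁻¹ • (q • (K * E + E * K) - q⁻¹ • (K' * E + E * K')) := by
        simp only [osp21SqrtCasimir, add_mul, sub_mul, mul_sub, smul_mul_assoc,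
          mul_smul_comm, smul_add, smul_sub, mul_assoc]
        abel
    _ = 0 := by
        simp only [hEF, smul_mul_assoc, sub_mul, hKE, hK'E]
        match_scalars <;> field_simp <;> ring

theorem osp21SqrtCasimir_anticommute_F (hq : q + q⁻¹ ≠ 0)
    (hEF : E * F + F * E = (q + q⁻¹)⁻¹ • (K - K'))
    (hKF : K * F = (q ^ 2)⁻¹ • (F * K)) (hK'F : K' * F = q ^ 2 • (F * K')) :
    osp21SqrtCasimir q E F K K' * F + F * osp21SqrtCasimir q E F K K' = 0 := by
  have hq0 : q ≠ 0 := by rintro rfl; simp at hq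
  calc _ = F * (E * F + F * E)
        - ((q + q⁻¹) ^ 2)⁻¹ • (q • (K * F + F * K) - q⁻¹ • (K' * F + F * K')) := by
        simp only [osp21SqrtCasimir, mul_add, sub_mul, mul_sub, smul_mul_assoc,
          mul_smul_comm, smul_add, smul_sub, mul_assoc]
        abel
    _ = 0 := by
        simp only [hEF, mul_smul_comm, mul_sub, hKF, hK'F]
        match_scalars <;> field_simp <;> ring

theorem osp21SqrtCasimir_commute_K (hq : q ≠ 0) (hKK' : Commute K K')
    (hKE : K * E = q ^ 2 • (E * K)) (hKF : K * F = (q ^ 2)⁻¹ • (F * K)) :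
    Commute (osp21SqrtCasimir q E F K K') K := by
  have hFE : Commute K (F * E) := by
    rw [Commute, SemiconjBy, ← mul_assoc, hKF, smul_mul_assoc, mul_assoc, hKE, mul_smul_comm,
      smul_smul, inv_mul_cancel₀ (pow_ne_zero 2 hq), one_smul, mul_assoc]
  have hCartan : Commute (q • K - q⁻¹ • K') K :=
    ((Commute.refl K).smul_left q).sub_left (hKK'.symm.smul_left _)
  exact hFE.symm.sub_left (hCartan.smul_left _)

end

theorem commute_mul_self_of_mul_add_mul_eq_zero {R : Type*} [Ring R] {a b : R}
    (h : a * b + b * a = 0) : Commute (a * a) b := by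
  have hab : a * b = -(b * a) := eq_neg_of_add_eq_zero_left h
  rw [Commute, SemiconjBy, mul_assoc, hab, mul_neg, ← mul_assoc, hab, neg_mul, neg_neg, mul_assoc]

/-- In an algebra with `𝓔, 𝓕, 𝓚` satisfying the `U_q(osp(2|1))`
relations (`𝓚` invertible with inverse `𝓚'`), the element
`√C = 𝓕𝓔 - (q𝓚 - q⁻¹𝓚')/(q+q⁻¹)²` anticommutes with `𝓔` and `𝓕` and commutes
with `𝓚`; consequently its square commutes with `𝓔`, `𝓕`, `𝓚`. -/
theorem osp21_sqrt_casimir_supercommutes (q : ℂ) (hq : q ≠ 0)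
    (hq1 : q + q⁻¹ ≠ 0)
    (A : Type*) [Ring A] [Algebra ℂ A]
    (𝓔 𝓕 𝓚 𝓚' : A)
    (hK : 𝓚 * 𝓚' = 1) (hK' : 𝓚' * 𝓚 = 1)
    (hEF : 𝓔 * 𝓕 + 𝓕 * 𝓔 = (q + q⁻¹)⁻¹ • (𝓚 - 𝓚'))
    (hKE : 𝓚 * 𝓔 = (q ^ 2) • (𝓔 * 𝓚))
    (hKF : 𝓚 * 𝓕 = (q ^ (-2 : ℤ)) • (𝓕 * 𝓚)) :
    let C : A := 𝓕 * 𝓔 - ((q + q⁻¹) ^ 2)⁻¹ • (q • 𝓚 - q⁻¹ • 𝓚')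
    (C * 𝓔 + 𝓔 * C = 0) ∧ (C * 𝓕 + 𝓕 * C = 0) ∧ (C * 𝓚 = 𝓚 * C) ∧
    ((C * C) * 𝓔 = 𝓔 * (C * C)) ∧ ((C * C) * 𝓕 = 𝓕 * (C * C)) ∧
    ((C * C) * 𝓚 = 𝓚 * (C * C)) := by
  intro C
  have hq2 : q ^ 2 ≠ 0 := pow_ne_zero 2 hq
  have hKF' : 𝓚 * 𝓕 = (q ^ 2)⁻¹ • (𝓕 * 𝓚) := by rwa [zpow_neg, zpow_ofNat] at hKF
  have hK'E := mul_eq_inv_smul_mul_of_mul_eq_smul_mul hq2 hK hK' hKE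
  have hK'F := mul_eq_inv_smul_mul_of_mul_eq_smul_mul (inv_ne_zero hq2) hK hK' hKF'
  rw [inv_inv] at hK'F
  have hCE : C * 𝓔 + 𝓔 * C = 0 := osp21SqrtCasimir_anticommute_E hq1 hEF hKE hK'E
  have hCF : C * 𝓕 + 𝓕 * C = 0 := osp21SqrtCasimir_anticommute_F hq1 hEF hKF' hK'F
  have hCK : Commute C 𝓚 := osp21SqrtCasimir_commute_K hq (hK.trans hK'.symm) hKE hKF'
  exact ⟨hCE, hCF, hCK, commute_mul_self_of_mul_add_mul_eq_zero hCE,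
    commute_mul_self_of_mul_add_mul_eq_zero hCF, hCK.mul_left hCK⟩
end

section
/- Let R be a commutative ℂ-algebra and let q be a complex number that is not a root of unity, λ an invertible formal variable. Suppose given invertible elements Q₊(μ), Q₋(μ) ∈ R for each μ in the multiplicative group generated by λ and q^{1/2}, satisfying the quantum super-Wronskian relation Q₊(q^{1/2}μ)Q₋(q^{-1/2}μ) + Q₊(q^{-1/2}μ)Q₋(q^{1/2}μ) = c for a fixed central invertible constant c and all μ. Define c·T_s(μ) = Q₊(q^{(s+1)/2}μ)Q₋(q^{-(s+1)/2}μ) + (-1)^s Q₊(q^{-(s+1)/2}μ)Q₋(q^{(s+1)/2}μ) for integers s ≥ 0. Then the fusion relation holds: T_s(q^{1/2}μ)·T_s(q^{-1/2}μ) = T_{s+1}(μ)·T_{s-1}(μ) + (-1)^s for all s ≥ 1. -/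
/-! Multiplied by `c²`, both sides of the fusion relation involve `Q₊, Q₋` only at the four
points `r^(±s) μ`, `r^(±(s+2)) μ`, and their difference factors (`fusion_identity`) as
`(-1)^s W₊ W₋`, where `W₊`, `W₋` are the Wronskians at `r^(±(s+1)) μ`, both equal to `c`. -/

theorem fusion_identity {R : Type*} [CommRing R] (ε a₁ a₃ b₁ b₃ a₁' a₃' b₁' b₃' : R) :
    (a₃ * b₁' + ε * (a₁' * b₃)) * (a₁ * b₃' + ε * (a₃' * b₁))
      = (a₃ * b₃' - ε * (a₃' * b₃)) * (a₁ * b₁' - ε * (a₁' * b₁))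
        + ε * ((a₃ * b₁ + a₁ * b₃) * (a₁' * b₃' + a₃' * b₁')) := by
  ring

section Lattice

variable {R G : Type*} [CommRing R] [CommGroup G] {r : G} {Qp Qm : G → Rˣ} {c : Rˣ}

theorem mul_transfer_zpow_mul {T : ℕ → G → R}
    (hT : ∀ (s : ℕ) (μ : G), (c : R) * T s μ
        = (Qp (r ^ (s + 1) * μ) : R) * (Qm ((r ^ (s + 1))⁻¹ * μ) : R)
          + (-1 : R) ^ s * ((Qp ((r ^ (s + 1))⁻¹ * μ) : R) * (Qm (r ^ (s + 1) * μ) : R)))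
    (s : ℕ) {j a b : ℤ} (ha : j + (s + 1) = a) (hb : j - (s + 1) = b) (μ : G) :
    (c : R) * T s (r ^ j * μ)
      = (Qp (r ^ a * μ) : R) * (Qm (r ^ b * μ) : R)
        + (-1 : R) ^ s * ((Qp (r ^ b * μ) : R) * (Qm (r ^ a * μ) : R)) := by
  have hx : r ^ (s + 1) * (r ^ j * μ) = r ^ a * μ := by
    rw [← ha, ← zpow_natCast, ← mul_assoc, ← zpow_add, add_comm]; push_cast; rfl
  have hy : (r ^ (s + 1))⁻¹ * (r ^ j * μ) = r ^ b * μ := by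
    rw [← hb, ← zpow_natCast, ← zpow_neg, ← mul_assoc, ← zpow_add, sub_eq_add_neg, add_comm]
    push_cast; rfl
  rw [hT, hx, hy]

theorem wronskian_zpow_mul
    (hW : ∀ μ : G, (Qp (r * μ) : R) * (Qm (r⁻¹ * μ) : R)
        + (Qp (r⁻¹ * μ) : R) * (Qm (r * μ) : R) = (c : R))
    {j a b : ℤ} (ha : j + 1 = a) (hb : j - 1 = b) (μ : G) :
    (Qp (r ^ a * μ) : R) * (Qm (r ^ b * μ) : R)
      + (Qp (r ^ b * μ) : R) * (Qm (r ^ a * μ) : R) = (c : R) := by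
  have hx : r * (r ^ j * μ) = r ^ a * μ := by
    rw [← ha, ← mul_assoc, zpow_add_one, mul_comm r]
  have hy : r⁻¹ * (r ^ j * μ) = r ^ b * μ := by
    rw [← hb, ← mul_assoc, zpow_sub_one, mul_comm r⁻¹]
  rw [← hW (r ^ j * μ), hx, hy]

end Lattice

/-- fusion relation for transfer matrices.  Values `Q₊(μ), Q₋(μ)`
are invertible elements of a commutative ring `R`, indexed by a commutative
group `G` of spectral parameters on which `r = q^{1/2}` acts by multiplication.
Given the quantum super-Wronskian relation
`Q₊(q^{1/2}μ)Q₋(q^{-1/2}μ) + Q₊(q^{-1/2}μ)Q₋(q^{1/2}μ) = c` and the definition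
`c·T_s(μ) = Q₊(q^{(s+1)/2}μ)Q₋(q^{-(s+1)/2}μ) + (-1)^s Q₊(q^{-(s+1)/2}μ)Q₋(q^{(s+1)/2}μ)`,
the fusion relation
`T_s(q^{1/2}μ)T_s(q^{-1/2}μ) = T_{s+1}(μ)T_{s-1}(μ) + (-1)^s` holds for `s ≥ 1`. -/
theorem fusion_relation (R : Type*) [CommRing R]
    (G : Type*) [CommGroup G] (r : G)
    (Qp Qm : G → Rˣ) (c : Rˣ)
    (hW : ∀ μ : G, (Qp (r * μ) : R) * (Qm (r⁻¹ * μ) : R)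
        + (Qp (r⁻¹ * μ) : R) * (Qm (r * μ) : R) = (c : R))
    (T : ℕ → G → R)
    (hT : ∀ (s : ℕ) (μ : G), (c : R) * T s μ
        = (Qp (r ^ (s + 1) * μ) : R) * (Qm ((r ^ (s + 1))⁻¹ * μ) : R)
          + (-1 : R) ^ s * ((Qp ((r ^ (s + 1))⁻¹ * μ) : R) * (Qm (r ^ (s + 1) * μ) : R)))
    (s : ℕ) (hs : 1 ≤ s) (μ : G) :
    T s (r * μ) * T s (r⁻¹ * μ) = T (s + 1) μ * T (s - 1) μ + (-1 : R) ^ s := by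
  obtain ⟨k, rfl⟩ := Nat.exists_eq_add_of_le' hs
  rw [Nat.add_sub_cancel]
  have hTr := mul_transfer_zpow_mul hT (k + 1) (j := 1) (a := k + 3) (b := -(k + 1))
    (by omega) (by omega) μ
  have hTr' := mul_transfer_zpow_mul hT (k + 1) (j := -1) (a := k + 1) (b := -(k + 3))
    (by omega) (by omega) μ
  have hTsucc := mul_transfer_zpow_mul hT (k + 2) (j := 0) (a := k + 3) (b := -(k + 3))
    (by omega) (by omega) μ
  have hTpred := mul_transfer_zpow_mul hT k (j := 0) (a := k + 1) (b := -(k + 1))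
    (by omega) (by omega) μ
  have hWp := wronskian_zpow_mul hW (j := k + 2) (a := k + 3) (b := k + 1) (by omega)
    (by omega) μ
  have hWm := wronskian_zpow_mul hW (j := -(k + 2)) (a := -(k + 1)) (b := -(k + 3))
    (by omega) (by omega) μ
  rw [zpow_one] at hTr
  rw [zpow_neg_one] at hTr'
  rw [zpow_zero, one_mul] at hTsucc hTpred
  have hscaled : (c * T (k + 1) (r * μ)) * (c * T (k + 1) (r⁻¹ * μ))
      = (c * T (k + 2) μ) * (c * T k μ) + (-1 : R) ^ (k + 1) * (c * c) := by
    rw [hTr, hTr', hTsucc, hTpred, fusion_identity, hWp, hWm]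
    ring
  refine (c.isUnit.mul c.isUnit).mul_left_cancel ?_
  linear_combination hscaled
end

section
/- Under the same hypotheses (commutative ring, Wronskian relation Q₊(q^{1/2}μ)Q₋(q^{-1/2}μ) + Q₊(q^{-1/2}μ)Q₋(q^{1/2}μ) = c, and c·T₁(μ) = Q₊(qμ)Q₋(q^{-1}μ) - Q₊(q^{-1}μ)Q₋(qμ)), the Baxter T-Q relation holds: T₁(μ)·Q₊(μ) = Q₊(qμ) - Q₊(q^{-1}μ) and T₁(μ)·Q₋(μ) = Q₋(q^{-1}μ) - Q₋(qμ). -/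
/-! With `p₀, p₁, p₂` and `m₀, m₁, m₂` the values of `Q₊` and `Q₋` at `q⁻¹μ, μ, qμ`, the Wronskian
relation at `q^{1/2}μ` and at `q^{-1/2}μ` reads `p₂m₁ + p₁m₂ = c = p₁m₀ + p₀m₁`. Multiplying
`c T₁ = p₂m₀ - p₀m₂` by `p₁` (resp. `m₁`) and substituting these two expressions for `c` leaves
`c (p₂ - p₀)` (resp. `c (m₀ - m₂)`); then cancel the unit `c`. -/

theorem baxter_of_wronskian {R : Type*} [CommRing R] {p₀ p₁ p₂ m₀ m₁ m₂ c t : R}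
    (hc : IsUnit c) (hW_up : p₂ * m₁ + p₁ * m₂ = c) (hW_down : p₁ * m₀ + p₀ * m₁ = c)
    (ht : c * t = p₂ * m₀ - p₀ * m₂) :
    t * p₁ = p₂ - p₀ ∧ t * m₁ = m₀ - m₂ :=
  ⟨hc.mul_left_cancel (by linear_combination p₁ * ht + p₂ * hW_down - p₀ * hW_up),
    hc.mul_left_cancel (by linear_combination m₁ * ht + m₀ * hW_up - m₂ * hW_down)⟩

/-- Baxter T-Q relation.  With the quantum super-Wronskian
relation `Q₊(q^{1/2}μ)Q₋(q^{-1/2}μ) + Q₊(q^{-1/2}μ)Q₋(q^{1/2}μ) = c` and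
`c·T₁(μ) = Q₊(qμ)Q₋(q⁻¹μ) - Q₊(q⁻¹μ)Q₋(qμ)` (here `r = q^{1/2}` acts on the
group of spectral parameters), one has
`T₁(μ)Q₊(μ) = Q₊(qμ) - Q₊(q⁻¹μ)` and `T₁(μ)Q₋(μ) = Q₋(q⁻¹μ) - Q₋(qμ)`. -/
theorem baxter_TQ_relation (R : Type*) [CommRing R]
    (G : Type*) [CommGroup G] (r : G)
    (Qp Qm : G → Rˣ) (c : Rˣ)
    (hW : ∀ μ : G, (Qp (r * μ) : R) * (Qm (r⁻¹ * μ) : R)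
        + (Qp (r⁻¹ * μ) : R) * (Qm (r * μ) : R) = (c : R))
    (T₁ : G → R)
    (hT : ∀ μ : G, (c : R) * T₁ μ
        = (Qp (r ^ 2 * μ) : R) * (Qm ((r ^ 2)⁻¹ * μ) : R)
          - (Qp ((r ^ 2)⁻¹ * μ) : R) * (Qm (r ^ 2 * μ) : R))
    (μ : G) :
    T₁ μ * (Qp μ : R) = (Qp (r ^ 2 * μ) : R) - (Qp ((r ^ 2)⁻¹ * μ) : R) ∧
    T₁ μ * (Qm μ : R) = (Qm ((r ^ 2)⁻¹ * μ) : R) - (Qm (r ^ 2 * μ) : R) := by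
  have hW_up := hW (r * μ)
  have hW_down := hW (r⁻¹ * μ)
  rw [inv_mul_cancel_left, ← mul_assoc, ← pow_two] at hW_up
  rw [mul_inv_cancel_left, ← mul_assoc, ← mul_inv, ← pow_two] at hW_down
  exact baxter_of_wronskian c.isUnit hW_up hW_down (hT μ)
end

section
/- Let F be a field, q ∈ F invertible with q^{k} ≠ ±1 for relevant k, and suppose Q₊(μ), Q₋(μ) ∈ F* satisfy Q₊(q^{1/2}μ)Q₋(q^{-1/2}μ) + Q₊(q^{-1/2}μ)Q₋(q^{1/2}μ) = c for all μ. Define c·T_s(μ) = Q₊(q^{(s+1)/2}μ)Q₋(q^{-(s+1)/2}μ) + (-1)^s Q₊(q^{-(s+1)/2}μ)Q₋(q^{(s+1)/2}μ). Then for even s ≥ 0, T_s(μ) = Q₊(q^{(s+1)/2}μ)·Q₊(q^{-(s+1)/2}μ)·∑_{k=-s/2}^{s/2} (-1)^{k+s/2} / (Q₊(q^{k+1/2}μ)·Q₊(q^{k-1/2}μ)). -/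
/-!
Write `r = q^{1/2}`. With `ρ(ν) = Q₋(ν)/Q₊(ν)`, dividing the Wronskian relation at `q^k μ` by `Q₊(q^{k+1/2}μ)Q₊(q^{k-1/2}μ)`
gives `c / (Q₊(q^{k+1/2}μ)Q₊(q^{k-1/2}μ)) = ρ(q^{k-1/2}μ) + ρ(q^{k+1/2}μ)`. Hence the alternating sum
telescopes to `c⁻¹ (ρ(q^{-(s+1)/2}μ) + ρ(q^{(s+1)/2}μ))`, and multiplying by
`Q₊(q^{(s+1)/2}μ)Q₊(q^{-(s+1)/2}μ)` gives exactly the defining expression of `T_s(μ)` for even `s`.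
-/

open Finset

section

variable {F : Type*} [Field F]

theorem sum_Icc_neg_one_zpow_mul_add_succ (g : ℤ → F) {a b : ℤ} (hab : a ≤ b) :
    ∑ k ∈ Icc a b, (-1 : F) ^ (k - a) * (g k + g (k + 1)) = g a + (-1) ^ (b - a) * g (b + 1) := by
  induction b, hab using Int.leInduction with
  | base => simp
  | succ b hab ih =>
    rw [← insert_Icc_right_eq_Icc_add_one (by omega), sum_insert (by simp), ih,
      show b + 1 - a = b - a + 1 by ring, zpow_add_one₀ (by norm_num)]
    ring

variable {G : Type*} [CommGroup G]

def qRatio (Qp Qm : G → Fˣ) (ν : G) : F := Qm ν / Qp ν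

variable (r : G) (Qp Qm : G → Fˣ) (c : Fˣ)

theorem div_mul_eq_qRatio_add_qRatio {ν : G}
    (hW : (Qp (r * ν) : F) * Qm (r⁻¹ * ν) + Qp (r⁻¹ * ν) * Qm (r * ν) = c) :
    (c : F) / (Qp (r * ν) * Qp (r⁻¹ * ν)) = qRatio Qp Qm (r⁻¹ * ν) + qRatio Qp Qm (r * ν) := by
  rw [qRatio, qRatio, div_add_div _ _ (Units.ne_zero _) (Units.ne_zero _), ← hW]
  ring

theorem sum_Icc_neg_one_zpow_div_eq
    (hW : ∀ μ : G, (Qp (r * μ) : F) * Qm (r⁻¹ * μ) + Qp (r⁻¹ * μ) * Qm (r * μ) = c)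
    (t : ℕ) (μ : G) :
    ∑ k ∈ Icc (-(t : ℤ)) t, (-1 : F) ^ (k + t) / (Qp (r ^ (2 * k + 1) * μ) * Qp (r ^ (2 * k - 1) * μ))
      = (c : F)⁻¹ * (qRatio Qp Qm ((r ^ (2 * t + 1))⁻¹ * μ) + qRatio Qp Qm (r ^ (2 * t + 1) * μ)) := by
  have hterm (k : ℤ) :
      (Qp (r ^ (2 * k + 1) * μ) : F) * Qp (r ^ (2 * k - 1) * μ)
        = Qp (r * (r ^ (2 * k) * μ)) * Qp (r⁻¹ * (r ^ (2 * k) * μ)) := by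
    congr 3 <;> group
  have hshift (k : ℤ) : r * (r ^ (2 * k) * μ) = r⁻¹ * (r ^ (2 * (k + 1)) * μ) := by group
  calc
    _ = ∑ k ∈ Icc (-(t : ℤ)) t, (c : F)⁻¹ * ((-1 : F) ^ (k - -(t : ℤ)) *
          (qRatio Qp Qm (r⁻¹ * (r ^ (2 * k) * μ)) + qRatio Qp Qm (r⁻¹ * (r ^ (2 * (k + 1)) * μ)))) := by
      refine sum_congr rfl fun k _ => ?_
      rw [hterm, ← hshift, ← div_mul_eq_qRatio_add_qRatio r Qp Qm c (hW _), sub_neg_eq_add]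
      field_simp
    _ = _ := by
      have hsign : (-1 : F) ^ ((t : ℤ) - -t) = 1 := by
        rw [show (t : ℤ) - -t = (2 * t : ℕ) by push_cast; ring, zpow_natCast, pow_mul, neg_one_sq,
          one_pow]
      rw [← mul_sum, sum_Icc_neg_one_zpow_mul_add_succ _ (by omega), hsign, one_mul]
      congr 3 <;> group

end

/-- telescoping formula for transfer matrices in terms of a
single Q-operator.  `Q₊(μ), Q₋(μ)` are nonzero elements of a field `F` indexed
by a commutative group `G` of spectral parameters with `r = q^{1/2}`, and
`c·T_s(μ) = Q₊(q^{(s+1)/2}μ)Q₋(q^{-(s+1)/2}μ) + (-1)^s Q₊(q^{-(s+1)/2}μ)Q₋(q^{(s+1)/2}μ)`.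
Under the quantum super-Wronskian relation, for even `s = 2t`:
`T_s(μ) = Q₊(q^{(s+1)/2}μ)Q₊(q^{-(s+1)/2}μ)·∑_{k=-s/2}^{s/2} (-1)^{k+s/2}/(Q₊(q^{k+1/2}μ)Q₊(q^{k-1/2}μ))`. -/
theorem transfer_matrix_Q_sum (F : Type*) [Field F]
    (G : Type*) [CommGroup G] (r : G)
    (Qp Qm : G → Fˣ) (c : Fˣ)
    (hW : ∀ μ : G, (Qp (r * μ) : F) * (Qm (r⁻¹ * μ) : F)
        + (Qp (r⁻¹ * μ) : F) * (Qm (r * μ) : F) = (c : F))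
    (T : ℕ → G → F)
    (hT : ∀ (s : ℕ) (μ : G), (c : F) * T s μ
        = (Qp (r ^ (s + 1) * μ) : F) * (Qm ((r ^ (s + 1))⁻¹ * μ) : F)
          + (-1 : F) ^ s * ((Qp ((r ^ (s + 1))⁻¹ * μ) : F) * (Qm (r ^ (s + 1) * μ) : F)))
    (t : ℕ) (μ : G) :
    T (2 * t) μ
      = (Qp (r ^ (2 * t + 1) * μ) : F) * (Qp ((r ^ (2 * t + 1))⁻¹ * μ) : F) *
          ∑ k ∈ Finset.Icc (-(t : ℤ)) (t : ℤ),
            (-1 : F) ^ (k + t) /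
              ((Qp (r ^ (2 * k + 1) * μ) : F) * (Qp (r ^ (2 * k - 1) * μ) : F)) := by
  rw [sum_Icc_neg_one_zpow_div_eq r Qp Qm c hW, ← mul_right_inj' c.ne_zero, hT, pow_mul]
  simp only [qRatio, neg_one_sq, one_pow, one_mul]
  field_simp
end
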